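/- arXiv:2311.06432 — 2 statements merged into one kernel-verified Lean document; each statement's English description precedes it below -/
import Mathlib

section
/- Assume 0 < p_eps < 1 and that the usefulness chain P_v is irreducible (for all levels i, j there exists m ≥ 1 with (P_v^m)_{ij} > 0). Then the constrained MDP is weakly accessible with an empty transient part: for every pair of states s, s' in S = {1,…,Δmax} × {1,…,K} there exists a stationary deterministic policy π : S → {0,1} and an integer n ≥ 0 such that the n-step transition probability ((P_π)^n)(s, s') is strictly positive. -/
open Matrix Filter

/-- Truncated successor age (0-indexed: index `d` encodes age `d+1`,
so this encodes `min (Δ+1) Δmax`). -/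
def ageSucc {dmax : ℕ} (d : Fin dmax) : Fin dmax :=
  ⟨min (d.val + 1) (dmax - 1), lt_of_le_of_lt (min_le_right _ _) (Nat.sub_lt d.pos one_pos)⟩

/-- One-step transition probability from state `s = (age, usefulness)` to `s'`
under the real-valued action `a ∈ {0,1}`: to an age-one state `(1, j)` it is
`a·(1−p_eps)·p_{ij}`, to `(min(Δ+1,Δmax), i)` it is `a·p_eps + (1−a)`, and `0` elsewhere. -/
def step {dmax K : ℕ} (Pv : Matrix (Fin K) (Fin K) ℝ) (peps : ℝ) (a : ℝ)
    (s s' : Fin dmax × Fin K) : ℝ :=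
  (if s'.1 = (⟨0, s.1.pos⟩ : Fin dmax) then a * (1 - peps) * Pv s.2 s'.2 else 0)
  + (if s'.1 = ageSucc s.1 ∧ s'.2 = s.2 then a * peps + (1 - a) else 0)

/-- The transition matrix on `S = {1,…,Δmax} × {1,…,K}` induced by a stationary
deterministic policy `π : S → {0,1}` (`true` = pull, `false` = silent). -/
def polMat {dmax K : ℕ} (Pv : Matrix (Fin K) (Fin K) ℝ) (peps : ℝ)
    (π : Fin dmax × Fin K → Bool) :
    Matrix (Fin dmax × Fin K) (Fin dmax × Fin K) ℝ :=
  Matrix.of fun s s' => step Pv peps (if π s then 1 else 0) s s'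

section Aux

variable {dmax K : ℕ}

/-- Entries of powers of an entrywise nonnegative matrix are nonnegative. -/
lemma pvPowNonneg (Pv : Matrix (Fin K) (Fin K) ℝ) (h : ∀ i j, 0 ≤ Pv i j) :
    ∀ m i j, 0 ≤ (Pv ^ m) i j := by
  intro m
  induction m with
  | zero => intro i j; simp only [pow_zero, Matrix.one_apply]; split <;> norm_num
  | succ m ih =>
    intro i j
    rw [pow_succ, Matrix.mul_apply]
    exact Finset.sum_nonneg fun k _ => mul_nonneg (ih i k) (h k j)

/-- The always-pull transition matrix. -/
noncomputable def Mpull (Pv : Matrix (Fin K) (Fin K) ℝ) (peps : ℝ) :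
    Matrix (Fin dmax × Fin K) (Fin dmax × Fin K) ℝ :=
  polMat Pv peps (fun _ => true)

lemma Mpull_apply (Pv : Matrix (Fin K) (Fin K) ℝ) (peps : ℝ)
    (s s' : Fin dmax × Fin K) :
    Mpull Pv peps s s' =
      (if s'.1 = (⟨0, s.1.pos⟩ : Fin dmax) then (1 - peps) * Pv s.2 s'.2 else 0)
      + (if s'.1 = ageSucc s.1 ∧ s'.2 = s.2 then peps else 0) := by
  simp only [Mpull, polMat, step, Matrix.of_apply, if_true]
  norm_num

lemma Mpull_nonneg (Pv : Matrix (Fin K) (Fin K) ℝ) (hPv : ∀ i j, 0 ≤ Pv i j)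
    (peps : ℝ) (hp0 : 0 ≤ peps) (hp1 : peps ≤ 1) :
    ∀ s s' : Fin dmax × Fin K, 0 ≤ Mpull Pv peps s s' := by
  intro s s'
  rw [Mpull_apply]
  have h := hPv s.2 s'.2
  have h1 : (0:ℝ) ≤ (if s'.1 = (⟨0, s.1.pos⟩ : Fin dmax) then
      (1 - peps) * Pv s.2 s'.2 else 0) := by split <;> nlinarith
  have h2 : (0:ℝ) ≤ (if s'.1 = ageSucc s.1 ∧ s'.2 = s.2 then peps else 0) := by
    split <;> nlinarith
  linarith

lemma MpullPow_nonneg (Pv : Matrix (Fin K) (Fin K) ℝ) (hPv : ∀ i j, 0 ≤ Pv i j)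
    (peps : ℝ) (hp0 : 0 ≤ peps) (hp1 : peps ≤ 1) :
    ∀ n (s s' : Fin dmax × Fin K), 0 ≤ ((Mpull Pv peps) ^ n) s s' := by
  intro n
  induction n with
  | zero => intro s s'; simp only [pow_zero, Matrix.one_apply]; split <;> norm_num
  | succ n ih =>
    intro s s'
    rw [pow_succ, Matrix.mul_apply]
    exact Finset.sum_nonneg fun k _ => mul_nonneg (ih s k)
      (Mpull_nonneg Pv hPv peps hp0 hp1 k s')

lemma Mpull_trans (Pv : Matrix (Fin K) (Fin K) ℝ) (hPv : ∀ i j, 0 ≤ Pv i j)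
    (peps : ℝ) (hp0 : 0 ≤ peps) (hp1 : peps ≤ 1)
    {a b : ℕ} {s u : Fin dmax × Fin K} (t : Fin dmax × Fin K)
    (h1 : 0 < ((Mpull Pv peps) ^ a) s t) (h2 : 0 < ((Mpull Pv peps) ^ b) t u) :
    0 < ((Mpull Pv peps) ^ (a + b)) s u := by
  rw [pow_add, Matrix.mul_apply]
  apply Finset.sum_pos'
  · intro k _
    exact mul_nonneg (MpullPow_nonneg Pv hPv peps hp0 hp1 a s k)
      (MpullPow_nonneg Pv hPv peps hp0 hp1 b k u)
  · exact ⟨t, Finset.mem_univ t, mul_pos h1 h2⟩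

/-- the age-zero fin, assuming `2 ≤ dmax`. -/
def zFin (hd : 2 ≤ dmax) : Fin dmax := ⟨0, by omega⟩

lemma ageSucc_ne_z (hd : 2 ≤ dmax) (d : Fin dmax) : zFin hd ≠ ageSucc d := by
  apply Fin.ne_of_val_ne
  simp only [zFin, ageSucc]
  omega

/-- one successful pull: positive transition to age zero, usefulness per `Pv`. -/
lemma Mpull_success (hd : 2 ≤ dmax) (Pv : Matrix (Fin K) (Fin K) ℝ)
    (peps : ℝ) (hp1 : peps < 1)
    (d : Fin dmax) {i j : Fin K} (h : 0 < Pv i j) :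
    0 < Mpull Pv peps (d, i) ((zFin hd, j) : Fin dmax × Fin K) := by
  rw [Mpull_apply]
  have hz : (zFin hd : Fin dmax) = (⟨0, d.pos⟩ : Fin dmax) := rfl
  rw [if_pos hz, if_neg]
  · simp only [add_zero]
    nlinarith
  · intro hcon
    exact ageSucc_ne_z hd d hcon.1

/-- one failed pull: positive transition to the successor age, same usefulness. -/
lemma Mpull_fail (hd : 2 ≤ dmax) (Pv : Matrix (Fin K) (Fin K) ℝ)
    (peps : ℝ) (hp0 : 0 < peps) (d : Fin dmax) (i : Fin K) :
    0 < Mpull Pv peps (d, i) ((ageSucc d, i) : Fin dmax × Fin K) := by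
  rw [Mpull_apply]
  rw [if_neg, if_pos ⟨rfl, rfl⟩]
  · simpa using hp0
  · intro hcon
    exact ageSucc_ne_z hd d hcon.symm

/-- `m ≥ 1` successful pulls land at age zero with usefulness distributed per `Pv^m`. -/
lemma Mpull_reach_zero (hd : 2 ≤ dmax) (Pv : Matrix (Fin K) (Fin K) ℝ)
    (hPv : ∀ i j, 0 ≤ Pv i j) (peps : ℝ) (hp0 : 0 ≤ peps) (hp1 : peps < 1) :
    ∀ m : ℕ, 1 ≤ m → ∀ (d : Fin dmax) (i j : Fin K), 0 < (Pv ^ m) i j →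
      0 < ((Mpull Pv peps) ^ m) (d, i) ((zFin hd, j) : Fin dmax × Fin K) := by
  intro m
  induction m with
  | zero => omega
  | succ m ih =>
    intro _ d i j hpos
    rcases Nat.eq_zero_or_pos m with hm | hm
    · subst hm
      rw [pow_one] at hpos ⊢
      exact Mpull_success hd Pv peps hp1 d hpos
    · rw [pow_succ'] at hpos
      rw [Matrix.mul_apply] at hpos
      have hex : ∃ k : Fin K, 0 < Pv i k * (Pv ^ m) k j := by
        by_contra hcon
        push_neg at hcon
        have : ∑ k, Pv i k * (Pv ^ m) k j ≤ 0 := Finset.sum_nonpos fun k _ => hcon k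
        linarith
      obtain ⟨k, hk⟩ := hex
      have hk1 : 0 < Pv i k := by
        rcases mul_pos_iff.mp hk with ⟨h1, _⟩ | ⟨h1, _⟩
        · exact h1
        · exact absurd h1 (not_lt.mpr (hPv i k))
      have hk2 : 0 < (Pv ^ m) k j := by
        rcases mul_pos_iff.mp hk with ⟨_, h2⟩ | ⟨_, h2⟩
        · exact h2
        · exact absurd h2 (not_lt.mpr (pvPowNonneg Pv hPv m k j))
      have step1 : 0 < ((Mpull Pv peps) ^ 1) (d, i) ((zFin hd, k) : Fin dmax × Fin K) := by
        rw [pow_one]; exact Mpull_success hd Pv peps hp1 d hk1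
      have step2 := ih hm (zFin hd) k j hk2
      have := Mpull_trans Pv hPv peps hp0 (le_of_lt hp1) _ step1 step2
      simpa [Nat.add_comm] using this
  

/-- from age zero, `k` failed pulls land at age `min k (dmax - 1)`, same usefulness. -/
lemma Mpull_age_up (hd : 2 ≤ dmax) (Pv : Matrix (Fin K) (Fin K) ℝ)
    (hPv : ∀ i j, 0 ≤ Pv i j) (peps : ℝ) (hp0 : 0 < peps) (hp1 : peps < 1)
    (j : Fin K) :
    ∀ k : ℕ, 0 < ((Mpull Pv peps) ^ k) ((zFin hd, j) : Fin dmax × Fin K)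
      ((⟨min k (dmax - 1), lt_of_le_of_lt (min_le_right _ _) (by omega)⟩, j) :
        Fin dmax × Fin K) := by
  intro k
  induction k with
  | zero =>
    rw [pow_zero, Matrix.one_apply, if_pos]
    · norm_num
    · refine Prod.ext (Fin.ext ?_) rfl
      simp [zFin]
  | succ k ih =>
    set d : Fin dmax := ⟨min k (dmax - 1), lt_of_le_of_lt (min_le_right _ _) (by omega)⟩
    have hage : ageSucc d = (⟨min (k + 1) (dmax - 1),
        lt_of_le_of_lt (min_le_right _ _) (by omega)⟩ : Fin dmax) := by
      apply Fin.ext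
      simp only [ageSucc, d]
      omega
    have step1 : 0 < ((Mpull Pv peps) ^ 1) ((d, j) : Fin dmax × Fin K)
        ((⟨min (k + 1) (dmax - 1), lt_of_le_of_lt (min_le_right _ _) (by omega)⟩, j) :
          Fin dmax × Fin K) := by
      rw [pow_one, ← hage]
      exact Mpull_fail hd Pv peps hp0 d j
    exact Mpull_trans Pv hPv peps (le_of_lt hp0) (le_of_lt hp1) _ ih step1

end Aux

/-- if `0 < p_eps < 1` and the usefulness chain `P_v` is irreducible, the CMDP
is weakly accessible with empty transient part: for every pair of states `s, s'` there is a
stationary deterministic policy `π` and `n ≥ 0` with `((P_π)^n)(s, s') > 0`. -/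
theorem cmdp_weakly_accessible
    {dmax K : ℕ} (hd : 2 ≤ dmax) (hK : 1 ≤ K)
    (Pv : Matrix (Fin K) (Fin K) ℝ)
    (hPv_nn : ∀ i j, 0 ≤ Pv i j) (hPv_row : ∀ i, ∑ j, Pv i j = 1)
    (peps : ℝ) (hp0 : 0 < peps) (hp1 : peps < 1)
    (hirr : ∀ i j : Fin K, ∃ m : ℕ, 1 ≤ m ∧ 0 < (Pv ^ m) i j) :
    ∀ s s' : Fin dmax × Fin K,
      ∃ (π : Fin dmax × Fin K → Bool) (n : ℕ),
        0 < ((polMat Pv peps π) ^ n) s s' := by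
  intro s s'
  obtain ⟨m, hm1, hmpos⟩ := hirr s.2 s'.2
  refine ⟨fun _ => true, m + s'.1.val, ?_⟩
  have h1 : 0 < ((Mpull Pv peps) ^ m) (s.1, s.2) ((zFin hd, s'.2) : Fin dmax × Fin K) :=
    Mpull_reach_zero hd Pv hPv_nn peps (le_of_lt hp0) hp1 m hm1 s.1 s.2 s'.2 hmpos
  have h2 := Mpull_age_up hd Pv hPv_nn peps hp0 hp1 s'.2 s'.1.val
  have heq : ((⟨min s'.1.val (dmax - 1),
      lt_of_le_of_lt (min_le_right _ _) (by omega)⟩ : Fin dmax), s'.2) = s' := by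
    refine Prod.ext ?_ rfl
    apply Fin.ext
    have := s'.1.isLt
    simp only []
    omega
  rw [heq] at h2
  have := Mpull_trans Pv hPv_nn peps (le_of_lt hp0) (le_of_lt hp1) _ h1 h2
  simpa [Mpull] using this
end

section
/- Assume 0 ≤ p_eps ≤ 1. For every integer m ≥ 1, all usefulness indices i, j ∈ {1,…,K}, and all ages Δ, Δ' ∈ {1,…,Δmax}, the (m + Δ' − 1)-step transition probability of the always-pull chain satisfies ((P_{π₁})^{m+Δ'−1})((Δ, i), (Δ', j)) ≥ (1 − p_eps)^m · (P_v^m)_{ij} · p_eps^{Δ'−1}. -/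
open Matrix Filter

/-!
Split the `m + Δ' - 1` steps into `m` steps ending at age one and `Δ' - 1` steps climbing the
age ladder. Since all entries are nonnegative, an entry of `P^(a+b)` dominates the term of any
single intermediate state in its Chapman–Kolmogorov sum, so the target entry is at least the
product of the two pieces. Every step enters age one at `j` with weight at least
`(1 - p_eps) p_{ij}`, which iterates to `(1 - p_eps)^m (P_v^m)_{ij}`, and every step advances
the age with weight at least `p_eps`.
-/

namespace Matrix

variable {ι : Type*} [Fintype ι] [DecidableEq ι] {M : Matrix ι ι ℝ}

lemma pow_apply_mul_pow_apply_le_pow_add_apply (hM : ∀ s t, 0 ≤ M s t) (a b : ℕ)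
    (s u t : ι) :
    (M ^ a) s u * (M ^ b) u t ≤ (M ^ (a + b)) s t := by
  rw [pow_add, mul_apply]
  exact Finset.single_le_sum (f := fun v => (M ^ a) s v * (M ^ b) v t)
    (fun v _ => mul_nonneg (pow_apply_nonneg hM a s v) (pow_apply_nonneg hM b v t))
    (Finset.mem_univ u)

lemma pow_le_pow_apply_iterate (hM : ∀ s t, 0 ≤ M s t) {p : ℝ} (hp : 0 ≤ p) (f : ι → ι)
    (hf : ∀ s, p ≤ M s (f s)) (n : ℕ) (s : ι) : p ^ n ≤ (M ^ n) s (f^[n] s) := by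
  induction n with
  | zero => simp
  | succ n ih =>
    calc p ^ (n + 1) = p ^ n * p := pow_succ p n
      _ ≤ (M ^ n) s (f^[n] s) * (M ^ 1) (f^[n] s) (f (f^[n] s)) := by
        rw [pow_one]
        exact mul_le_mul ih (hf _) hp (pow_apply_nonneg hM n _ _)
      _ ≤ (M ^ (n + 1)) s (f^[n + 1] s) := by
        rw [Function.iterate_succ_apply']
        exact pow_apply_mul_pow_apply_le_pow_add_apply hM n 1 _ _ _

lemma mul_pow_apply_le_pow_apply_of_fiber {α κ : Type*} [Fintype α] [DecidableEq α]
    [Fintype κ] [DecidableEq κ] {M : Matrix (α × κ) (α × κ) ℝ} (hM : ∀ s t, 0 ≤ M s t)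
    {P : Matrix κ κ ℝ} (hP : ∀ i j, 0 ≤ P i j) {c : ℝ} (hc : 0 ≤ c) (z : α)
    (hMP : ∀ s j, c * P s.2 j ≤ M s (z, j)) (m : ℕ) (s : α × κ) (j : κ) :
    c ^ (m + 1) * (P ^ (m + 1)) s.2 j ≤ (M ^ (m + 1)) s (z, j) := by
  induction m generalizing s with
  | zero => simpa using hMP s j
  | succ m ih =>
    have hfiber : ∀ j', c * P s.2 j' * (c ^ (m + 1) * (P ^ (m + 1)) j' j)
        ≤ M s (z, j') * (M ^ (m + 1)) (z, j') (z, j) := fun j' =>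
      mul_le_mul (hMP s j') (ih (z, j')) (mul_nonneg (pow_nonneg hc _) (pow_apply_nonneg hP _ _ _))
        (hM _ _)
    calc c ^ (m + 2) * (P ^ (m + 2)) s.2 j
        = ∑ j', c * P s.2 j' * (c ^ (m + 1) * (P ^ (m + 1)) j' j) := by
          rw [pow_succ' P (m + 1), mul_apply, Finset.mul_sum]
          exact Finset.sum_congr rfl fun _ _ => by ring
      _ ≤ ∑ j', M s (z, j') * (M ^ (m + 1)) (z, j') (z, j) :=
          Finset.sum_le_sum fun j' _ => hfiber j'
      _ ≤ ∑ t : α × κ, M s t * (M ^ (m + 1)) t (z, j) := by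
          rw [Fintype.sum_prod_type]
          exact Finset.single_le_sum
            (f := fun a => ∑ j', M s (a, j') * (M ^ (m + 1)) (a, j') (z, j))
            (fun a _ => Finset.sum_nonneg fun j' _ =>
              mul_nonneg (hM _ _) (pow_apply_nonneg hM _ _ _)) (Finset.mem_univ z)
      _ = (M ^ (m + 2)) s (z, j) := by rw [pow_succ' M (m + 1), mul_apply]

end Matrix

lemma ageSucc_iterate_val {dmax : ℕ} (n : ℕ) (d : Fin dmax) :
    (ageSucc^[n] d).val = min (d.val + n) (dmax - 1) := by
  induction n with
  | zero => simp only [Function.iterate_zero, id_eq]; omega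
  | succ n ih =>
    rw [Function.iterate_succ_apply']
    simp only [ageSucc, ih]
    omega

section AlwaysPull

variable {dmax K : ℕ} {Pv : Matrix (Fin K) (Fin K) ℝ} {peps : ℝ}

lemma polMat_true_apply (s s' : Fin dmax × Fin K) :
    polMat Pv peps (fun _ => true) s s' =
      (if s'.1 = ⟨0, s.1.pos⟩ then (1 - peps) * Pv s.2 s'.2 else 0)
        + (if s'.1 = ageSucc s.1 ∧ s'.2 = s.2 then peps else 0) := by
  simp only [polMat, step, of_apply, if_true, one_mul, sub_self, add_zero]

lemma polMat_true_nonneg (hPv : ∀ i j, 0 ≤ Pv i j) (hp0 : 0 ≤ peps) (hp1 : peps ≤ 1)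
    (s s' : Fin dmax × Fin K) : 0 ≤ polMat Pv peps (fun _ => true) s s' := by
  have := mul_nonneg (sub_nonneg.2 hp1) (hPv s.2 s'.2)
  rw [polMat_true_apply]
  positivity

lemma mul_le_polMat_true_apply_age_zero (hp0 : 0 ≤ peps) (s : Fin dmax × Fin K) (j : Fin K) :
    (1 - peps) * Pv s.2 j ≤ polMat Pv peps (fun _ => true) s (⟨0, s.1.pos⟩, j) := by
  rw [polMat_true_apply, if_pos rfl]
  exact le_add_of_nonneg_right (by positivity)

lemma le_polMat_true_apply_ageSucc (hPv : ∀ i j, 0 ≤ Pv i j) (hp1 : peps ≤ 1)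
    (s : Fin dmax × Fin K) : peps ≤ polMat Pv peps (fun _ => true) s (ageSucc s.1, s.2) := by
  have := mul_nonneg (sub_nonneg.2 hp1) (hPv s.2 s.2)
  rw [polMat_true_apply, if_pos (show _ ∧ _ from ⟨rfl, rfl⟩)]
  exact le_add_of_nonneg_left (by positivity)

end AlwaysPull

theorem always_pull_chain_lower_bound_general
    {dmax K : ℕ}
    (Pv : Matrix (Fin K) (Fin K) ℝ)
    (hPv_nn : ∀ i j, 0 ≤ Pv i j)
    (peps : ℝ) (hp0 : 0 ≤ peps) (hp1 : peps ≤ 1)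
    (m : ℕ) (hm : 1 ≤ m) (i j : Fin K) (d d' : Fin dmax) :
    (1 - peps) ^ m * (Pv ^ m) i j * peps ^ d'.val ≤
      ((polMat Pv peps (fun _ => true)) ^ (m + d'.val)) (d, i) (d', j) := by
  set M := polMat Pv peps (fun _ => true)
  have hM : ∀ s t, 0 ≤ M s t := polMat_true_nonneg hPv_nn hp0 hp1
  obtain ⟨n, rfl⟩ := Nat.exists_eq_add_of_le' hm
  let z : Fin dmax := ⟨0, d.pos⟩
  have hpull : (1 - peps) ^ (n + 1) * (Pv ^ (n + 1)) i j ≤ (M ^ (n + 1)) (d, i) (z, j) :=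
    mul_pow_apply_le_pow_apply_of_fiber hM hPv_nn (sub_nonneg.2 hp1) z
      (mul_le_polMat_true_apply_age_zero hp0) n (d, i) j
  have hclimb : peps ^ d'.val ≤ (M ^ d'.val) (z, j) (d', j) := by
    have hladder : (Prod.map ageSucc id)^[d'.val] (z, j) = (d', j) := by
      rw [Prod.map_iterate, Function.iterate_id, Prod.map_apply, id_eq, Prod.mk.injEq]
      refine ⟨Fin.ext ?_, rfl⟩
      rw [ageSucc_iterate_val]
      simp only [z]
      omega
    simpa only [hladder] using pow_le_pow_apply_iterate hM hp0 (Prod.map ageSucc id)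
      (le_polMat_true_apply_ageSucc hPv_nn hp1) d'.val (z, j)
  calc (1 - peps) ^ (n + 1) * (Pv ^ (n + 1)) i j * peps ^ d'.val
      ≤ (M ^ (n + 1)) (d, i) (z, j) * (M ^ d'.val) (z, j) (d', j) :=
        mul_le_mul hpull hclimb (by positivity) (pow_apply_nonneg hM _ _ _)
    _ ≤ (M ^ (n + 1 + d'.val)) (d, i) (d', j) :=
        pow_apply_mul_pow_apply_le_pow_add_apply hM _ _ _ _ _

/-- for `0 ≤ p_eps ≤ 1`, every `m ≥ 1`, all usefulness indices `i, j` and all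
ages `Δ, Δ'` (zero-indexed: `d` encodes age `d+1`), the `(m + Δ' − 1)`-step transition
probability of the always-pull chain satisfies
`((P_{π₁})^{m+Δ'−1})((Δ,i),(Δ',j)) ≥ (1−p_eps)^m · (P_v^m)_{ij} · p_eps^{Δ'−1}`. -/
theorem always_pull_chain_lower_bound
    {dmax K : ℕ} (hd : 2 ≤ dmax) (hK : 1 ≤ K)
    (Pv : Matrix (Fin K) (Fin K) ℝ)
    (hPv_nn : ∀ i j, 0 ≤ Pv i j) (hPv_row : ∀ i, ∑ j, Pv i j = 1)
    (peps : ℝ) (hp0 : 0 ≤ peps) (hp1 : peps ≤ 1)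
    (m : ℕ) (hm : 1 ≤ m) (i j : Fin K) (d d' : Fin dmax) :
    (1 - peps) ^ m * (Pv ^ m) i j * peps ^ d'.val ≤
      ((polMat Pv peps (fun _ => true)) ^ (m + d'.val)) (d, i) (d', j) :=
  always_pull_chain_lower_bound_general Pv hPv_nn peps hp0 hp1 m hm i j d d'
end
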